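/- arXiv:1508.06754 — 2 statements merged into one kernel-verified Lean document; each statement's English description precedes it below -/
import Mathlib

section
/- For every N ≥ 2, the concatenation rev(f_2)·rev(f_3)⋯rev(f_N) of the reversals of the finite Fibonacci words is a prefix of the Fibonacci infinite word f. In other words, f = ∏_{n≥2} rev(f_n). -/
/-- The finite Fibonacci words over the alphabet {0,1}: f 1 = 1, f 2 = 0,
and f n = f (n-1) ++ f (n-2) for n ≥ 3. -/
def fibWord : ℕ → List ℕ
  | 0 => []
  | 1 => [1]
  | 2 => [0]
  | n + 3 => fibWord (n + 2) ++ fibWord (n + 1)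

/-- A finite word is a prefix of the Fibonacci infinite word iff it is a
prefix of some finite Fibonacci word f m with m ≥ 2. -/
def IsFibPrefix (x : List ℕ) : Prop := ∃ m, 2 ≤ m ∧ x <+: fibWord m

/-!
For `n ≥ 3` the word `f_n` is `P_n · t_n` with `P_n` a palindrome and `t_n` its last two letters,
which alternate between `01` and `10`; hence `rev(f_n) = t_{n-1} · P_n`. So if
`w_N := rev(f_2) ⋯ rev(f_N)` satisfies `w_N · t_N = f_{N+2}`, then
`w_{N+1} · t_{N+1} = w_N · t_N · P_{N+1} · t_{N+1} = f_{N+2} · f_{N+1} = f_{N+3}`.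
The palindromes come from the near-commutation of `f_{n-1}` and `f_{n-2}`: the words
`f_{n-1} f_{n-2}` and `f_{n-2} f_{n-1}` differ exactly by swapping their last two letters.
-/

lemma fibWord_add_three (n : ℕ) : fibWord (n + 3) = fibWord (n + 2) ++ fibWord (n + 1) := rfl

def fibTail (n : ℕ) : List ℕ := if n % 2 = 1 then [0, 1] else [1, 0]

lemma fibTail_add_two (n : ℕ) : fibTail (n + 2) = fibTail n := by
  simp [fibTail, Nat.add_mod_right]

lemma reverse_fibTail_succ (n : ℕ) : (fibTail (n + 1)).reverse = fibTail n := by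
  unfold fibTail
  split_ifs <;> simp_all <;> omega

lemma exists_fibWord_swap_eq (n : ℕ) : ∃ c, fibWord (n + 3) = c ++ fibTail (n + 3) ∧
    fibWord (n + 1) ++ fibWord (n + 2) = c ++ fibTail (n + 2) := by
  induction n with
  | zero => exact ⟨[], rfl, rfl⟩
  | succ n ih =>
    obtain ⟨c, hc, hc_swap⟩ := ih
    refine ⟨fibWord (n + 2) ++ c, ?_, ?_⟩
    · show fibWord (n + 4) = fibWord (n + 2) ++ c ++ fibTail (n + 4)
      rw [fibWord_add_three (n + 1), fibWord_add_three n, List.append_assoc, hc_swap,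
        fibTail_add_two (n + 2), List.append_assoc]
    · show fibWord (n + 2) ++ fibWord (n + 3) = fibWord (n + 2) ++ c ++ fibTail (n + 3)
      rw [hc, List.append_assoc]

lemma exists_palindrome_fibWord_eq (n : ℕ) :
    ∃ P : List ℕ, P.Palindrome ∧ fibWord (n + 3) = P ++ fibTail (n + 3) := by
  induction n using Nat.twoStepInduction with
  | zero => exact ⟨[], .nil, rfl⟩
  | one => exact ⟨[0], .singleton 0, rfl⟩
  | more n ih₁ ih₂ =>
    obtain ⟨P₁, hP₁, hf₁⟩ := ih₁
    obtain ⟨P₂, hP₂, hf₂ : fibWord (n + 4) = P₂ ++ fibTail (n + 4)⟩ := ih₂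
    obtain ⟨c, hc : fibWord (n + 5) = c ++ fibTail (n + 5),
      hc_swap : fibWord (n + 3) ++ fibWord (n + 4) = c ++ fibTail (n + 4)⟩ :=
      exists_fibWord_swap_eq (n + 2)
    have hf : fibWord (n + 5) = (P₂ ++ fibTail (n + 4) ++ P₁) ++ fibTail (n + 5) := by
      rw [fibWord_add_three (n + 2), hf₁, hf₂, fibTail_add_two (n + 3)]
      simp only [List.append_assoc]
    have hc_eq : P₂ ++ fibTail (n + 4) ++ P₁ = c := by
      rw [hf] at hc
      exact List.append_cancel_right hc
    have hc_eq_swap : fibWord (n + 3) ++ P₂ = c := by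
      rw [hf₂, ← List.append_assoc] at hc_swap
      exact List.append_cancel_right hc_swap
    refine ⟨_, List.Palindrome.of_reverse_eq ?_, hf⟩
    calc (P₂ ++ fibTail (n + 4) ++ P₁).reverse = fibWord (n + 3) ++ P₂ := by
          rw [hf₁, List.reverse_append, List.reverse_append, hP₁.reverse_eq, hP₂.reverse_eq,
            reverse_fibTail_succ, List.append_assoc]
      _ = P₂ ++ fibTail (n + 4) ++ P₁ := hc_eq_swap.trans hc_eq.symm

lemma flatten_reverse_fibWord_append_fibTail (K : ℕ) :
    ((List.range (K + 1)).map (fun i => (fibWord (i + 2)).reverse)).flatten ++ fibTail (K + 2)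
      = fibWord (K + 4) := by
  induction K with
  | zero => rfl
  | succ K ih =>
    obtain ⟨P, hP, hf⟩ := exists_palindrome_fibWord_eq K
    rw [List.range_succ, List.map_append, List.flatten_append, List.map_singleton,
      List.flatten_singleton, hf, List.reverse_append, hP.reverse_eq, reverse_fibTail_succ,
      fibWord_add_three (K + 2), ← ih, hf]
    simp only [List.append_assoc]

theorem stmt16 (N : ℕ) (hN : 2 ≤ N) :
    IsFibPrefix (((List.range (N - 1)).map (fun i => (fibWord (i + 2)).reverse)).flatten) := by
  obtain ⟨K, rfl⟩ : ∃ K, N = K + 2 := ⟨N - 2, by omega⟩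
  exact ⟨K + 4, by omega, _, flatten_reverse_fibWord_append_fibTail K⟩
end

section
/- For every N ≥ 2, the concatenation rev(f_4)·rev(f_6)⋯rev(f_{2N}) of the reversals of the even-indexed finite Fibonacci words is a prefix of the Fibonacci infinite word f. In other words, f = ∏_{n≥2} rev(f_{2n}) (de Luca's factorization). -/
def fibSuffix (k : ℕ) : List ℕ := if Even k then [0, 1] else [1, 0]

def centralWord : ℕ → List ℕ
  | 0 => []
  | 1 => [0]
  | k + 2 => centralWord (k + 1) ++ fibSuffix (k + 1) ++ centralWord k

lemma fibSuffix_reverse (k : ℕ) : (fibSuffix k).reverse = fibSuffix (k + 1) := by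
  by_cases hk : Even k <;> simp [fibSuffix, hk, Nat.even_add_one]

lemma fibSuffix_add_two (k : ℕ) : fibSuffix (k + 2) = fibSuffix k := by
  simp [fibSuffix, Nat.even_add]

lemma centralWord_add_two (k : ℕ) :
    centralWord (k + 2) = centralWord (k + 1) ++ fibSuffix (k + 1) ++ centralWord k := rfl

lemma centralWord_add_two_comm (k : ℕ) :
    centralWord (k + 2) = centralWord k ++ fibSuffix k ++ centralWord (k + 1) := by
  induction k with
  | zero => rfl
  | succ k ih =>
    calc centralWord (k + 3)
        = centralWord (k + 2) ++ fibSuffix k ++ centralWord (k + 1) := by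
          rw [centralWord_add_two (k + 1), fibSuffix_add_two]
      _ = centralWord (k + 1) ++ fibSuffix (k + 1) ++
            (centralWord k ++ fibSuffix k ++ centralWord (k + 1)) := by
          rw [centralWord_add_two k]; simp only [List.append_assoc]
      _ = centralWord (k + 1) ++ fibSuffix (k + 1) ++ centralWord (k + 2) := by rw [ih]

lemma centralWord_reverse (k : ℕ) : (centralWord k).reverse = centralWord k := by
  induction k using Nat.twoStepInduction with
  | zero => rfl
  | one => rfl
  | more k ih₀ ih₁ =>
    conv_lhs => rw [centralWord_add_two_comm]
    rw [List.reverse_append, List.reverse_append, ih₀, ih₁, fibSuffix_reverse,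
      centralWord_add_two, List.append_assoc]

lemma fibWord_eq_centralWord_append (k : ℕ) :
    fibWord (k + 3) = centralWord k ++ fibSuffix k := by
  induction k using Nat.twoStepInduction with
  | zero => rfl
  | one => rfl
  | more k ih₀ ih₁ =>
    rw [show fibWord (k + 2 + 3) = fibWord (k + 4) ++ fibWord (k + 3) from rfl, ih₀, ih₁,
      centralWord_add_two, fibSuffix_add_two]
    simp only [List.append_assoc]

lemma reverse_fibWord (k : ℕ) :
    (fibWord (k + 3)).reverse = fibSuffix (k + 1) ++ centralWord k := by
  rw [fibWord_eq_centralWord_append, List.reverse_append, fibSuffix_reverse, centralWord_reverse]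

lemma centralWord_add_two_eq_append_reverse_fibWord (k : ℕ) :
    centralWord (k + 2) = centralWord k ++ (fibWord (k + 4)).reverse := by
  rw [centralWord_add_two_comm, reverse_fibWord, fibSuffix_add_two, List.append_assoc]

lemma flatten_reverse_fibWord_even (M : ℕ) :
    ((List.range M).map (fun i => (fibWord (2 * (i + 2))).reverse)).flatten =
      centralWord (2 * M) := by
  induction M with
  | zero => rfl
  | succ M ih =>
    rw [List.range_succ, List.map_append, List.flatten_append, ih,
      show 2 * (M + 1) = 2 * M + 2 by ring, centralWord_add_two_eq_append_reverse_fibWord]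
    simp [show 2 * (M + 2) = 2 * M + 4 by ring]

theorem stmt17_general (N : ℕ) :
    IsFibPrefix (((List.range (N - 1)).map
      (fun i => (fibWord (2 * (i + 2))).reverse)).flatten) := by
  refine ⟨2 * (N - 1) + 3, by omega, ?_⟩
  rw [flatten_reverse_fibWord_even, fibWord_eq_centralWord_append]
  exact List.prefix_append _ _

theorem stmt17 (N : ℕ) (hN : 2 ≤ N) :
    IsFibPrefix (((List.range (N - 1)).map
      (fun i => (fibWord (2 * (i + 2))).reverse)).flatten) :=
  stmt17_general N
end
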